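/- The TILES state ρ = (1/4)(I₉ − Σ_{i=0}^{4} |ψ_i⟩⟨ψ_i|) is entangled: it is not a convex combination of product states σ_A ⊗ σ_B. -/

import Mathlib

/-!
The state `ρ` is a multiple of the projection onto the orthogonal complement of the TILES
vectors `ψᵢ = cᵢ • aᵢ ⊗ bᵢ`, so `⟨ψᵢ|ρ|ψᵢ⟩ = 0`. In a separable decomposition every term
`σA ⊗ σB` is positive semidefinite, hence `⟨aᵢ|σA|aᵢ⟩ ⟨bᵢ|σB|bᵢ⟩ = 0`, i.e. `σA aᵢ = 0` or
`σB bᵢ = 0`, for every `i`. Three of the five indices fall on the same side, and any three of the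
`aᵢ` (as any three of the `bᵢ`) form a basis of `ℂ³`; so `σA = 0` or `σB = 0`, against trace one.
-/

open Matrix ComplexOrder

/-- Standard basis vector `|i⟩` of `ℂ³`. -/
noncomputable def e (i : Fin 3) : Fin 3 → ℂ := Pi.single i 1

/-- Tensor product of two vectors of `ℂ³`, as a vector of `ℂ³ ⊗ ℂ³ ≅ ℂ⁹`. -/
def tens (a b : Fin 3 → ℂ) : Fin 3 × Fin 3 → ℂ := fun p => a p.1 * b p.2

/-- The five TILES vectors in `ℂ³ ⊗ ℂ³`. -/
noncomputable def tiles : Fin 5 → (Fin 3 × Fin 3 → ℂ)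
  | 0 => (1 / Real.sqrt 2 : ℝ) • tens (e 0) (e 0 - e 1)
  | 1 => (1 / Real.sqrt 2 : ℝ) • tens (e 0 - e 1) (e 2)
  | 2 => (1 / Real.sqrt 2 : ℝ) • tens (e 2) (e 1 - e 2)
  | 3 => (1 / Real.sqrt 2 : ℝ) • tens (e 1 - e 2) (e 0)
  | 4 => (1 / 3 : ℝ) • tens (e 0 + e 1 + e 2) (e 0 + e 1 + e 2)

/-- The TILES state `ρ = (1/4)(I₉ − Σᵢ |ψᵢ⟩⟨ψᵢ|)`. -/
noncomputable def tilesState : Matrix (Fin 3 × Fin 3) (Fin 3 × Fin 3) ℂ :=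
  (1 / 4 : ℂ) •
    (1 - ∑ i : Fin 5, Matrix.vecMulVec (tiles i) (fun q => (starRingEnd ℂ) (tiles i q)))

theorem one_sub_sum_vecMulVec_mulVec_eq_zero {ι n R : Type*} [Fintype ι] [DecidableEq ι]
    [Fintype n] [DecidableEq n] [CommRing R] [StarRing R] (v : ι → n → R)
    (hv : ∀ i j, star (v i) ⬝ᵥ v j = if i = j then 1 else 0) (k : ι) :
    (1 - ∑ i, vecMulVec (v i) (star (v i))) *ᵥ v k = 0 := by
  simp [sub_mulVec, sum_mulVec, vecMulVec_mulVec, hv]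

theorem dotProduct_mulVec_eq_zero_of_sum_smul {ι n : Type*} [Fintype ι] [Fintype n]
    (p : ι → ℝ) (M : ι → Matrix n n ℂ) (hp : ∀ j, 0 < p j) (hM : ∀ j, (M j).PosSemidef)
    (x : n → ℂ) (hx : star x ⬝ᵥ (∑ j, (p j : ℂ) • M j) *ᵥ x = 0) (j : ι) :
    star x ⬝ᵥ M j *ᵥ x = 0 := by
  have hterm : ∀ j, 0 ≤ (p j : ℂ) * (star x ⬝ᵥ M j *ᵥ x) := fun j =>
    mul_nonneg (by exact_mod_cast (hp j).le) ((hM j).dotProduct_mulVec_nonneg x)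
  simp only [sum_mulVec, dotProduct_sum, smul_mulVec, dotProduct_smul, smul_eq_mul] at hx
  have := (Finset.sum_eq_zero_iff_of_nonneg fun j _ => hterm j).1 hx j (Finset.mem_univ j)
  exact (mul_eq_zero.1 this).resolve_left (by exact_mod_cast (hp j).ne')

open Kronecker in
theorem star_tens_dotProduct_kronecker_mulVec_tens (A B : Matrix (Fin 3) (Fin 3) ℂ)
    (a b : Fin 3 → ℂ) :
    star (tens a b) ⬝ᵥ (A ⊗ₖ B) *ᵥ tens a b = (star a ⬝ᵥ A *ᵥ a) * (star b ⬝ᵥ B *ᵥ b) := by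
  have hmulVec : (A ⊗ₖ B) *ᵥ tens a b = tens (A *ᵥ a) (B *ᵥ b) := by
    ext ⟨p, q⟩
    simp only [mulVec, dotProduct, tens, kroneckerMap_apply, Fintype.sum_prod_type,
      Finset.sum_mul_sum]
    exact Finset.sum_congr rfl fun _ _ => Finset.sum_congr rfl fun _ _ => by ring
  rw [hmulVec]
  simp only [dotProduct, tens, Pi.star_apply, star_mul', Fintype.sum_prod_type, Finset.sum_mul_sum]
  exact Finset.sum_congr rfl fun _ _ => Finset.sum_congr rfl fun _ _ => by ring

theorem eq_zero_of_mulVec_rows_eq_zero {m n R : Type*} [Fintype n] [DecidableEq n] [CommRing R]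
    (M : Matrix m n R) (A : Matrix n n R) (hA : IsUnit A.det) (h : ∀ r, M *ᵥ A r = 0) :
    M = 0 := by
  have hMA : M * Aᵀ = 0 := by
    ext i r
    simpa [mul_apply, mulVec, dotProduct] using congrFun (h r) i
  have hAT : IsUnit Aᵀ.det := by rwa [det_transpose]
  calc M = M * Aᵀ * Aᵀ⁻¹ := by rw [Matrix.mul_assoc, mul_nonsing_inv _ hAT, Matrix.mul_one]
    _ = 0 := by rw [hMA, Matrix.zero_mul]

theorem exists_three_lt_of_fin_five (P : Fin 5 → Prop) :
    ∃ i j k, i < j ∧ j < k ∧ ((P i ∧ P j ∧ P k) ∨ (¬P i ∧ ¬P j ∧ ¬P k)) := by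
  classical
  have h : ∀ f : Fin 5 → Bool, ∃ i j k, i < j ∧ j < k ∧ f i = f j ∧ f j = f k := by decide
  obtain ⟨i, j, k, hij, hjk, hfij, hfjk⟩ := h fun i => decide (P i)
  refine ⟨i, j, k, hij, hjk, ?_⟩
  by_cases hi : P i <;> simp_all

def tilesA : Matrix (Fin 5) (Fin 3) ℤ := !![1, 0, 0; 1, -1, 0; 0, 0, 1; 0, 1, -1; 1, 1, 1]
def tilesB : Matrix (Fin 5) (Fin 3) ℤ := !![1, -1, 0; 0, 0, 1; 0, 1, -1; 1, 0, 0; 1, 1, 1]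

theorem det_tilesA_submatrix_ne_zero :
    ∀ i j k : Fin 5, i < j → j < k → (tilesA.submatrix ![i, j, k] id).det ≠ 0 := by
  simp only [det_fin_three]
  decide

theorem det_tilesB_submatrix_ne_zero :
    ∀ i j k : Fin 5, i < j → j < k → (tilesB.submatrix ![i, j, k] id).det ≠ 0 := by
  simp only [det_fin_three]
  decide

theorem eq_zero_of_mulVec_intCast_rows_eq_zero {ι m n K : Type*} [Fintype n] [DecidableEq n]
    [Field K] [CharZero K] (M : Matrix m n K) (T : Matrix ι n ℤ) (s : n → ι)
    (hT : (T.submatrix s id).det ≠ 0) (h : ∀ r, M *ᵥ T.map (↑) (s r) = 0) : M = 0 := by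
  refine eq_zero_of_mulVec_rows_eq_zero M ((T.submatrix s id).map (↑)) ?_ h
  rw [← Int.cast_det]
  exact isUnit_iff_ne_zero.2 (by exact_mod_cast hT)

theorem eq_zero_or_eq_zero_of_mulVec_tiles (M N : Matrix (Fin 3) (Fin 3) ℂ)
    (h : ∀ i, M *ᵥ tilesA.map (↑) i = 0 ∨ N *ᵥ tilesB.map (↑) i = 0) : M = 0 ∨ N = 0 := by
  obtain ⟨i, j, k, hij, hjk, ⟨hi, hj, hk⟩ | ⟨hi, hj, hk⟩⟩ :=
    exists_three_lt_of_fin_five fun i => M *ᵥ tilesA.map (↑) i = 0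
  · refine .inl <| eq_zero_of_mulVec_intCast_rows_eq_zero M tilesA ![i, j, k]
      (det_tilesA_submatrix_ne_zero i j k hij hjk) fun r => ?_
    fin_cases r <;> assumption
  · replace hi := (h i).resolve_left hi
    replace hj := (h j).resolve_left hj
    replace hk := (h k).resolve_left hk
    refine .inr <| eq_zero_of_mulVec_intCast_rows_eq_zero N tilesB ![i, j, k]
      (det_tilesB_submatrix_ne_zero i j k hij hjk) fun r => ?_
    fin_cases r <;> assumption

theorem tiles_eq_smul_tens (i : Fin 5) :
    ∃ c : ℝ, c ≠ 0 ∧ tiles i = c • tens (tilesA.map (↑) i) (tilesB.map (↑) i) := by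
  refine ⟨![1 / √2, 1 / √2, 1 / √2, 1 / √2, 1 / 3] i, ?_, ?_⟩
  · fin_cases i <;> simp
  · ext ⟨p, q⟩
    fin_cases i <;> fin_cases p <;> fin_cases q <;> simp [tiles, tens, e, tilesA, tilesB]

theorem tiles_orthonormal (i j : Fin 5) :
    star (tiles i) ⬝ᵥ tiles j = if i = j then 1 else 0 := by
  fin_cases i <;> fin_cases j <;>
    simp [tiles, dotProduct, tens, e, Fintype.sum_prod_type, Fin.sum_univ_three,
      Pi.single_apply, Complex.real_smul, Complex.ext_iff] <;>
    ring_nf <;> norm_num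

theorem tilesState_mulVec_tens (i : Fin 5) :
    tilesState *ᵥ tens (tilesA.map (↑) i) (tilesB.map (↑) i) = 0 := by
  obtain ⟨c, hc, hi⟩ := tiles_eq_smul_tens i
  have h : tilesState *ᵥ tiles i = 0 := by
    rw [tilesState, smul_mulVec]
    exact smul_eq_zero_of_right _ (one_sub_sum_vecMulVec_mulVec_eq_zero tiles tiles_orthonormal i)
  rw [hi, mulVec_smul] at h
  exact (smul_eq_zero.1 h).resolve_left hc

open Kronecker in
/-- The TILES state is entangled: it admits no separable decomposition. -/
theorem tilesState_entangled :
    ¬ ∃ (m : ℕ) (p : Fin m → ℝ) (σA σB : Fin m → Matrix (Fin 3) (Fin 3) ℂ),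
      (∀ j, 0 < p j) ∧ (∑ j, p j) = 1 ∧
      (∀ j, (σA j).PosSemidef ∧ (σA j).trace = 1) ∧
      (∀ j, (σB j).PosSemidef ∧ (σB j).trace = 1) ∧
      tilesState = ∑ j, ((p j : ℂ) • (σA j ⊗ₖ σB j)) := by
  rintro ⟨m, p, σA, σB, hp, hsum, hA, hB, hρ⟩
  obtain ⟨j⟩ : Nonempty (Fin m) := by
    rcases isEmpty_or_nonempty (Fin m) with h | h
    · simp at hsum
    · exact h
  have hkernel : ∀ i, σA j *ᵥ tilesA.map (↑) i = 0 ∨ σB j *ᵥ tilesB.map (↑) i = 0 := by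
    intro i
    have h := dotProduct_mulVec_eq_zero_of_sum_smul p _ hp
      (fun j => (hA j).1.kronecker (hB j).1) (tens (tilesA.map (↑) i) (tilesB.map (↑) i))
      (by rw [← hρ, tilesState_mulVec_tens, dotProduct_zero]) j
    rw [star_tens_dotProduct_kronecker_mulVec_tens] at h
    exact (mul_eq_zero.1 h).imp ((hA j).1.dotProduct_mulVec_zero_iff _).1
      ((hB j).1.dotProduct_mulVec_zero_iff _).1
  rcases eq_zero_or_eq_zero_of_mulVec_tiles _ _ hkernel with h | h
  · simpa [h] using (hA j).2
  · simpa [h] using (hB j).2
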